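/- For each nonzero integer n, the signed crossing count wr_n(K) = sum over classical crossings c of K with W_K(c) = n of sgn(c) is an invariant of virtual knots, i.e., it is unchanged under oriented virtual isotopy (classical Reidemeister moves, virtual Reidemeister moves and the detour move). -/

import Mathlib

/-!
# Virtual knots and links via signed Gauss codes

A virtual knot or link diagram, up to the virtual Reidemeister moves and the
detour move, is faithfully encoded by its signed oriented Gauss code: the
cyclic sequence, along each component, of passages through the classical
crossings, each passage recording the crossing's name, whether the strand
passes over or under, and the crossing sign.  Virtual crossings and the
detour move are invisible in this encoding, so oriented virtual isotopy is
generated by the oriented classical Reidemeister moves together with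
re-encoding moves (rotation of the base point, permutation of the components,
renaming of the crossings).
-/

open LaurentPolynomial

/-- A passage of a strand through a classical crossing of a virtual diagram. -/
structure Passage where
  id : ℕ
  isOver : Bool
  sign : ℤ
  deriving DecidableEq, Repr

instance : Inhabited Passage := ⟨⟨0, false, 0⟩⟩

/-- The affine-label increment when the strand passes through a crossing:
crossing to the left increases the label by one, crossing to the right
decreases it by one.  For a positive crossing the over-strand crosses to the
right and the under-strand to the left; for a negative crossing it is the
other way around.  Labels are unchanged at virtual crossings. -/
def Passage.inc (p : Passage) : ℤ := if p.isOver then -p.sign else p.sign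

/-- The Gauss code of one oriented circle component. -/
abbrev KCode := List Passage

/-- The list of classical crossing names appearing in a code. -/
def crossIds (a : KCode) : List ℕ := (a.map Passage.id).dedup

/-- The number of classical crossings. -/
def numCross (a : KCode) : ℕ := (crossIds a).length

/-- A valid knot code: every crossing has sign `±1` and occurs exactly once as
an over-passage and exactly once as an under-passage, with consistent sign. -/
def ValidK (a : KCode) : Prop :=
  ∀ p ∈ a, (p.sign = 1 ∨ p.sign = -1) ∧
    (a.filter (fun q => q.id == p.id && q.isOver)).length = 1 ∧
    (a.filter (fun q => q.id == p.id && !q.isOver)).length = 1 ∧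
    (∀ q ∈ a, q.id = p.id → q.sign = p.sign)

/-- The canonical affine label of the arc entering the `k`-th passage
(base label `0` on the arc entering the `0`-th passage). -/
def labelAt (a : KCode) (k : ℕ) : ℤ := ((a.take k).map Passage.inc).sum

/-- Position of the over-passage of crossing `i`. -/
def overPos (a : KCode) (i : ℕ) : ℕ := a.findIdx (fun p => p.id == i && p.isOver)

/-- Position of the under-passage of crossing `i`. -/
def underPos (a : KCode) (i : ℕ) : ℕ := a.findIdx (fun p => p.id == i && !p.isOver)

/-- The sign of crossing `i`. -/
def sgn (a : KCode) (i : ℕ) : ℤ :=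
  ((a.find? (fun p => p.id == i)).map Passage.sign).getD 0

/-- The weight `W_K(c)` of a crossing `c`: with incoming labels `a` (left) and
`b` (right) it is `W₊ = a - b - 1` if `sgn c = 1` and `W₋ = b - a + 1` if
`sgn c = -1`; equivalently it is
(label entering the over-passage) − (label entering the under-passage) − sign. -/
def wt (a : KCode) (i : ℕ) : ℤ :=
  labelAt a (overPos a i) - labelAt a (underPos a i) - sgn a i

/-- The affine index polynomial `P_K(t) = ∑_c sgn(c) (t^{W_K(c)} - 1)`. -/
noncomputable def affP (a : KCode) : LaurentPolynomial ℤ :=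
  ((crossIds a).map (fun i => (C (sgn a i)) * (T (wt a i) - 1))).sum

/-- The signed crossing count `wr_n(K) = ∑_{c : W_K(c) = n} sgn(c)`. -/
def wrn (a : KCode) (n : ℤ) : ℤ :=
  (((crossIds a).filter (fun i => wt a i == n)).map (sgn a)).sum

/-- A crossing is odd when it flanks an odd number of symbols of the Gauss
code, i.e. when the positions of its two passages differ by an even number. -/
def OddCross (a : KCode) (i : ℕ) : Bool := (overPos a i + underPos a i) % 2 == 0

/-- The odd writhe `J(K)`: the sum of the signs of the odd crossings. -/
def oddWrithe (a : KCode) : ℤ := (((crossIds a).filter (OddCross a)).map (sgn a)).sum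

/-- The reverse `K̄` of `K`: the same diagram with reversed orientation. -/
def reverseK (a : KCode) : KCode := a.reverse

/-- The (flat) mirror image `K*`: every classical crossing is switched, which
exchanges over- and under-passages and reverses all crossing signs. -/
def switchAll (a : KCode) : KCode := a.map (fun p => ⟨p.id, !p.isOver, -p.sign⟩)

/-- The vertical mirror image `K^!`: reflect the diagram in a plane
perpendicular to the plane of the diagram (which keeps the over/under data
and reverses all crossing signs) and reverse the orientation. -/
def vmirror (a : KCode) : KCode := (a.map (fun p => ⟨p.id, p.isOver, -p.sign⟩)).reverse

/-- Rename the crossings of a code by `f`. -/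
def relabel (f : ℕ → ℕ) (a : KCode) : KCode := a.map (fun p => { p with id := f p.id })

/-! ## Links -/

/-- A link code: a list of circle components. -/
abbrev LCode := List KCode

/-- Validity of a link code: the crossing data is globally consistent. -/
def ValidLink (L : LCode) : Prop := ValidK L.flatten

def crossIdsL (L : LCode) : List ℕ := crossIds L.flatten

def sgnL (L : LCode) (i : ℕ) : ℤ := sgn L.flatten i

/-- An affine (integer) labeling of the arcs of a link diagram:
`lab c k` is the label of the arc entering the `k`-th passage of the `c`-th
component; at each classical crossing with left incoming label `a` and right
incoming label `b`, the left outgoing label is `b+1` and the right outgoing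
label is `a-1`, i.e. passing through a passage changes the label by its
increment.  Labels are unchanged at virtual crossings. -/
def IsAffineLabeling (L : LCode) (lab : ℕ → ℕ → ℤ) : Prop :=
  ∀ c, c < L.length → ∀ k, k < (L.getD c []).length →
    lab c ((k + 1) % (L.getD c []).length) =
      lab c k + ((L.getD c []).getD k default).inc

/-- Locations `(component, position)` of the passages of crossing `i` that are
over-passages (`sel = true`) resp. under-passages (`sel = false`). -/
def locs (L : LCode) (i : ℕ) (sel : Bool) : List (ℕ × ℕ) :=
  (List.range L.length).flatMap (fun c =>
    (List.range (L.getD c []).length).filterMap (fun k =>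
      if ((L.getD c []).getD k default).id = i ∧ ((L.getD c []).getD k default).isOver = sel
      then some (c, k) else none))

/-- The weight of crossing `i` of a link diagram with affine labeling `lab`. -/
def wtL (L : LCode) (lab : ℕ → ℕ → ℤ) (i : ℕ) : ℤ :=
  lab ((locs L i true).headD (0, 0)).1 ((locs L i true).headD (0, 0)).2
    - lab ((locs L i false).headD (0, 0)).1 ((locs L i false).headD (0, 0)).2
    - sgnL L i

/-- The affine index polynomial of an affinely labeled link diagram. -/
noncomputable def affPL (L : LCode) (lab : ℕ → ℕ → ℤ) : LaurentPolynomial ℤ :=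
  ((crossIdsL L).map (fun i => (C (sgnL L i)) * (T (wtL L lab i) - 1))).sum

/-- The passages of component `c` whose partner passage lies on a different
component. -/
def crossPassages (L : LCode) (c : ℕ) : KCode :=
  (L.getD c []).filter (fun p =>
    ((L.getD c []).filter (fun q => q.id == p.id)).length == 1)

/-- The algebraic intersection number of component `c` with the union of the
other components: the signed count, in the plane, of the crossings of
component `c` with the other components (the strand crossing to the left
counts `+1`, to the right `−1`). -/
def algInt (L : LCode) (c : ℕ) : ℤ := ((crossPassages L c).map Passage.inc).sum

/-- A multi-component diagram is compatible when every component has algebraic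
intersection number zero with the union of the other components. -/
def Compatible (L : LCode) : Prop := ∀ c < L.length, algInt L c = 0

/-! ## Virtual isotopy

Link codes whose components carry an inert tracking label (a natural number);
the labels are preserved by isotopy and are used to follow components through
the births, deaths and saddles of a cobordism. -/

abbrev LLC := List (ℕ × KCode)

def plainL (L : LLC) : LCode := L.map Prod.snd

def idsOf (L : LLC) : List ℕ := crossIdsL (plainL L)

def pieceIds (L : LLC) : List ℕ := L.map Prod.fst

/-- `ReplC c c' segs segs'`: the circle `c'` is obtained from the circle `c`
by replacing, scanning from left to right, an initial batch of the listed
segments (`u` is replaced by `v` for each pair `(u, v)`), leaving `segs'`. -/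
inductive ReplC : KCode → KCode → List (KCode × KCode) → List (KCode × KCode) → Prop
  | nil (c : KCode) (segs : List (KCode × KCode)) : ReplC c c segs segs
  | cons {y y' : KCode} {segs segs' : List (KCode × KCode)} (x u v : KCode) :
      ReplC y y' segs segs' →
      ReplC (x ++ u ++ y) (x ++ v ++ y') ((u, v) :: segs) segs'

/-- `ReplL L L' segs`: the labeled link `L'` is obtained from `L` by
simultaneously performing all the listed segment replacements, in scanning
order. -/
inductive ReplL : LLC → LLC → List (KCode × KCode) → Prop
  | nil : ReplL [] [] []
  | cons {c c' : KCode} {L L' : LLC} {segs segs' : List (KCode × KCode)} (k : ℕ) :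
      ReplC c c' segs segs' → ReplL L L' segs' → ReplL ((k, c) :: L) ((k, c') :: L') segs

/-- `if b then [p, q] else [q, p]`. -/
def pairOf (b : Bool) (p q : Passage) : KCode := if b then [p, q] else [q, p]

/-- A generating move of oriented virtual isotopy on Gauss codes.  The
constructors `perm`, `rotate`, `rename` are inessential re-encodings; in
particular the virtual Reidemeister moves and the detour move leave the Gauss
code unchanged.  The constructors `r1`, `r2`, `r3` are the oriented classical
Reidemeister moves (`r1` and `r2` are stated as insertions; the inverse moves
are recovered by taking the symmetric closure). -/
inductive MoveStep : LLC → LLC → Prop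
  /-- re-ordering the components -/
  | perm {L L' : LLC} (h : L.Perm L') : MoveStep L L'
  /-- moving the base point of a component -/
  | rotate (k : ℕ) (x y : KCode) (L : LLC) :
      MoveStep ((k, x ++ y) :: L) ((k, y ++ x) :: L)
  /-- renaming the crossings injectively -/
  | rename {L : LLC} (f : ℕ → ℕ) (hf : Function.Injective f) :
      MoveStep L (L.map (fun c => (c.1, relabel f c.2)))
  /-- first Reidemeister move: insertion of a kink with a fresh crossing `i` -/
  | r1 {L L' : LLC} (i : ℕ) (o : Bool) (s : ℤ) (hs : s = 1 ∨ s = -1) (hi : i ∉ idsOf L)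
      (h : ReplL L L' [([], [⟨i, o, s⟩, ⟨i, !o, s⟩])]) : MoveStep L L'
  /-- second Reidemeister move: one strand slides across another, creating two
  fresh crossings `i, j` with opposite signs; `o` records whether the first
  strand passes over, `ord` the relative orientation of the strands. -/
  | r2 {L L' : LLC} (i j : ℕ) (o ord : Bool) (s : ℤ) (hs : s = 1 ∨ s = -1)
      (hij : i ≠ j) (hi : i ∉ idsOf L) (hj : j ∉ idsOf L)
      (h : ReplL L L'
        [([], [⟨i, o, s⟩, ⟨j, o, -s⟩]),
         ([], if ord then [⟨j, !o, -s⟩, ⟨i, !o, s⟩] else [⟨i, !o, s⟩, ⟨j, !o, -s⟩])]) :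
      MoveStep L L'
  /-- third Reidemeister move: a strand slides across a crossing.  Crossing
  `i` joins the top and the middle strand, `j` the top and the bottom strand,
  `k` the middle and the bottom strand; on each of the three strands the
  corresponding pair of adjacent passages is transposed.  The product of the
  three signs is `+1`, and the orders of the pairs along the strands are
  correlated with the signs as dictated by the orientations of the three
  strands (`t` records the order along the top strand). -/
  | r3 {L L' : LLC} (i j k : ℕ) (si sj sk : ℤ)
      (hsi : si = 1 ∨ si = -1) (hsj : sj = 1 ∨ sj = -1) (hsk : sk = 1 ∨ sk = -1)
      (hprod : si * sj * sk = 1)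
      (hij : i ≠ j) (hik : i ≠ k) (hjk : j ≠ k)
      (t : Bool) (segs : List (KCode × KCode))
      (hsegs : segs.Perm
        [(pairOf t ⟨i, true, si⟩ ⟨j, true, sj⟩,
          pairOf (!t) ⟨i, true, si⟩ ⟨j, true, sj⟩),
         (pairOf (t == (sj * sk == 1)) ⟨i, false, si⟩ ⟨k, true, sk⟩,
          pairOf (!(t == (sj * sk == 1))) ⟨i, false, si⟩ ⟨k, true, sk⟩),
         (pairOf (t == (si * sk == 1)) ⟨j, false, sj⟩ ⟨k, false, sk⟩,
          pairOf (!(t == (si * sk == 1))) ⟨j, false, sj⟩ ⟨k, false, sk⟩)])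
      (h : ReplL L L' segs) : MoveStep L L'

/-- Oriented virtual isotopy: the equivalence relation generated by the
classical Reidemeister moves, the virtual Reidemeister moves and the detour
move (the latter two being invisible on Gauss codes). -/
def Isotopic : LLC → LLC → Prop := Relation.EqvGen MoveStep

/-! ## Cobordism

A cobordism is a sequence of isotopies, births and deaths of unknotted
circles, and oriented saddle moves.  The schema of a cobordism is the abstract
surface it generates; we track its connected pieces through the component
labels, the genus of each piece, and the total genus of the pieces that have
been closed off, so that the genus of the schema is well defined. -/

/-- A state of a cobordism in progress: the current labeled link diagram (the
label of a circle names the surface piece it bounds), the genus of each piece,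
and the accumulated genus of closed-off pieces. -/
structure CobState where
  link : LLC
  genus : ℕ → ℕ
  closed : ℕ

/-- One step of a virtual cobordism. -/
inductive CobStep : CobState → CobState → Prop
  /-- a virtual isotopy move -/
  | isot {L L' : LLC} (g : ℕ → ℕ) (c : ℕ) (h : MoveStep L L') :
      CobStep ⟨L, g, c⟩ ⟨L', g, c⟩
  /-- birth of an unknotted circle, starting a fresh piece of genus `0` -/
  | birth (k : ℕ) (L : LLC) (g : ℕ → ℕ) (c : ℕ) (hk : k ∉ pieceIds L) :
      CobStep ⟨L, g, c⟩ ⟨(k, []) :: L, Function.update g k 0, c⟩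
  /-- death of an unknotted circle whose piece still has other boundary -/
  | death_keep (k : ℕ) (L : LLC) (g : ℕ → ℕ) (c : ℕ) (hk : k ∈ pieceIds L) :
      CobStep ⟨(k, []) :: L, g, c⟩ ⟨L, g, c⟩
  /-- death of an unknotted circle closing off its piece -/
  | death_close (k : ℕ) (L : LLC) (g : ℕ → ℕ) (c : ℕ) (hk : k ∉ pieceIds L) :
      CobStep ⟨(k, []) :: L, g, c⟩ ⟨L, g, c + g k⟩
  /-- oriented saddle splitting one circle into two (genus unchanged) -/
  | saddle_split (k : ℕ) (x y : KCode) (L : LLC) (g : ℕ → ℕ) (c : ℕ) :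
      CobStep ⟨(k, x ++ y) :: L, g, c⟩ ⟨(k, x) :: (k, y) :: L, g, c⟩
  /-- oriented saddle merging two boundary circles of the same piece
  (the genus of the piece increases by one) -/
  | saddle_merge_same (k : ℕ) (x y : KCode) (L : LLC) (g : ℕ → ℕ) (c : ℕ) :
      CobStep ⟨(k, x) :: (k, y) :: L, g, c⟩
        ⟨(k, x ++ y) :: L, Function.update g k (g k + 1), c⟩
  /-- oriented saddle merging boundary circles of two different pieces
  (the pieces merge and their genera add) -/
  | saddle_merge_diff (j k : ℕ) (x y : KCode) (L : LLC) (g : ℕ → ℕ) (c : ℕ)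
      (hjk : j ≠ k) :
      CobStep ⟨(j, x) :: (k, y) :: L, g, c⟩
        ⟨(j, x ++ y) :: (L.map fun p => if p.1 = k then (j, p.2) else p),
          Function.update (Function.update g j (g j + g k)) k 0, c⟩

/-- A virtual cobordism: a finite sequence of cobordism steps. -/
def Cob : CobState → CobState → Prop := Relation.ReflTransGen CobStep

/-- `L` and `L'` cobound a virtual cobordism (of some genus). -/
def Cobordant (L L' : LLC) : Prop :=
  ∃ g' c', Cob ⟨L, fun _ => 0, 0⟩ ⟨L', g', c'⟩

/-- The knot `a` bounds a virtual surface schema of genus `G`: there is a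
virtual cobordism from `a` to the empty link, and `G` is the total genus of
the pieces of its schema. -/
def BoundsGenus (a : KCode) (G : ℕ) : Prop :=
  ∃ g' : ℕ → ℕ, Cob ⟨[(0, a)], fun _ => 0, 0⟩ ⟨[], g', G⟩

/-! ## Concordance

A genus-zero cobordism (concordance) is one in which every critical point is
paired: each birth is paired with a canceling saddle and each death with a
canceling saddle.  An elementary concordance is a birth followed (after
isotopy) by a saddle amalgamating the born circle, or a saddle splitting off a
circle that (after isotopy) dies. -/

/-- One step of a concordance. -/
inductive ConcStep : LLC → LLC → Prop
  /-- a virtual isotopy -/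
  | isot {L L' : LLC} (h : Isotopic L L') : ConcStep L L'
  /-- elementary concordance: birth of an unknotted circle (tracked by the
  fresh label `k`), isotopy, then an oriented saddle amalgamating the born
  circle with another component -/
  | birth_saddle {L rest : LLC} (j k : ℕ) (x y : KCode)
      (hk : k ∉ pieceIds L)
      (h : Isotopic ((k, []) :: L) ((j, x) :: (k, y) :: rest)) :
      ConcStep L ((j, x ++ y) :: rest)
  /-- elementary concordance: an oriented saddle splitting off a circle
  (tracked by the fresh label `k`) which after isotopy is an unknotted,
  unlinked circle and dies -/
  | saddle_death {M rest : LLC} (j k : ℕ) (x y : KCode)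
      (hk : k ∉ pieceIds ((j, x ++ y) :: M))
      (h : Isotopic ((j, x) :: (k, y) :: M) ((k, []) :: rest)) :
      ConcStep ((j, x ++ y) :: M) rest

/-- Virtual concordance: genus-zero virtual cobordism. -/
def Concordant : LLC → LLC → Prop := Relation.EqvGen ConcStep

/-- Virtual concordance of knots. -/
def ConcordantK (a b : KCode) : Prop := Concordant [(0, a)] [(0, b)]

/-- The unknot: a circle with no classical crossings. -/
def unknotCode : KCode := []

/-- A virtual knot is (virtually) slice when it is virtually concordant to
the unknot. -/
def SliceK (a : KCode) : Prop := ConcordantK a unknotCode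

/-! ## Seifert circles and faces -/

/-- The position of the other passage of the crossing visited at position `k`. -/
def partnerIdx (a : KCode) (k : ℕ) : ℕ :=
  ((List.range a.length).filter
    (fun j => j != k && (a.getD j default).id == (a.getD k default).id)).headD 0

/-- Traversal of the diagram obtained by the oriented smoothing of every
classical crossing: from the arc entering passage `k+1` one exits along the
arc leaving the partner passage. -/
def seifNext (a : KCode) (k : ℕ) : ℕ := partnerIdx a ((k + 1) % a.length)

/-- A canonical representative of the Seifert circle through arc `k`. -/
def seifRep (a : KCode) (k : ℕ) : ℕ :=
  ((List.range a.length).map (fun t => (seifNext a)^[t] k)).foldr min k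

/-- The number of (virtual) Seifert circles: the number of cycles of the
oriented smoothing of all classical crossings.  A crossingless circle is a
single Seifert circle. -/
def seifertCount (a : KCode) : ℕ :=
  if a.length = 0 then 1 else ((List.range a.length).map (seifRep a)).dedup.length

/-- The counterclockwise-next edge-end around a crossing.  An edge-end is a
pair (position, isIn): the head (`isIn = true`) or the tail (`isIn = false`)
of an arc at the passage at that position. -/
def nextEnd (a : KCode) (e : ℕ × Bool) : ℕ × Bool :=
  let p := a.getD e.1 default
  (partnerIdx a e.1, if p.isOver == (p.sign == 1) then e.2 else !e.2)

/-- The edge-end at which a directed arc (a dart) arrives. -/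
def headEnd (a : KCode) (d : ℕ × Bool) : ℕ × Bool :=
  if d.2 then ((d.1 + 1) % a.length, true) else (d.1, false)

/-- The dart leaving along a given edge-end. -/
def dartFrom (a : KCode) (e : ℕ × Bool) : ℕ × Bool :=
  if e.2 then ((e.1 + a.length - 1) % a.length, false) else (e.1, true)

/-- The face-tracing successor of a dart. -/
def faceNext (a : KCode) (d : ℕ × Bool) : ℕ × Bool :=
  dartFrom a (nextEnd a (headEnd a d))

def encDart (d : ℕ × Bool) : ℕ := 2 * d.1 + (if d.2 then 1 else 0)

/-- A canonical representative of the face through a given dart. -/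
def faceRep (a : KCode) (d : ℕ × Bool) : ℕ :=
  ((List.range (2 * a.length)).map (fun t => encDart ((faceNext a)^[t] d))).foldr
    min (encDart d)

/-- The number of faces of the abstract (ribbon) diagram of a code. -/
def numFaces (a : KCode) : ℕ :=
  (((List.range a.length).flatMap (fun k => [(k, true), (k, false)])).map
    (faceRep a)).dedup.length

/-- A knot code is classical when its underlying abstract diagram is planar,
i.e. (by Euler's formula) when it has `n + 2` faces, `n` being the number of
crossings.  Classical knot diagrams are exactly the virtual knot diagrams
having a realization with no virtual crossings. -/
def IsClassical (a : KCode) : Prop := a = [] ∨ numFaces a = numCross a + 2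

/-! ## Flat diagrams -/

/-- A passage of a flat (no over/under information) virtual knot diagram:
`left = true` when the other strand crosses to the left, so that the affine
label increases by one. -/
structure FlatPassage where
  id : ℕ
  left : Bool
  deriving DecidableEq, Repr

instance : Inhabited FlatPassage := ⟨⟨0, false⟩⟩

/-- The label increment at a flat passage. -/
def FlatPassage.inc (p : FlatPassage) : ℤ := if p.left then 1 else -1

/-- A valid flat knot code: each crossing is traversed exactly twice, once
with increment `+1` and once with increment `-1`. -/
def ValidFlat (a : List FlatPassage) : Prop :=
  ∀ p ∈ a, (a.filter (fun q => q.id == p.id && q.left)).length = 1 ∧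
    (a.filter (fun q => q.id == p.id && !q.left)).length = 1

/-- An affine labeling of a flat knot diagram: `lab k` is the label of the arc
entering the `k`-th passage, and passing a crossing changes the label by the
increment of the passage. -/
def IsFlatLabeling (a : List FlatPassage) (lab : ℕ → ℤ) : Prop :=
  ∀ k, k < a.length → lab ((k + 1) % a.length) = lab k + (a.getD k default).inc

/-!
Each crossing has one over- and one under-passage, and its weight is the difference of the
affine labels entering them, minus its sign. Exchanging over and under permutes the passages of
a valid code and negates every increment, so the labels close up around the circle; hence
moving the base point shifts all labels by a constant and no weight changes. A first
Reidemeister move inserts a block of total increment zero and creates a crossing of weight `0`,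
invisible to `wr_n` for `n ≠ 0`; a second one inserts two such blocks and creates two crossings
of equal weight and opposite signs. A third one transposes three pairs of adjacent passages,
and the three resulting shifts of each weight cancel.
-/

def totalInc (a : KCode) : ℤ := (a.map Passage.inc).sum

@[simp] lemma totalInc_nil : totalInc [] = 0 := rfl

@[simp] lemma totalInc_cons (p : Passage) (a : KCode) : totalInc (p :: a) = p.inc + totalInc a :=
  List.sum_cons

@[simp] lemma totalInc_append (x y : KCode) : totalInc (x ++ y) = totalInc x + totalInc y := by
  simp [totalInc]

section FirstMatch

variable {P : Passage → Bool} {x : KCode}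

lemma labelAt_findIdx_append_of_exists (y : KCode) (hx : ∃ q ∈ x, P q) :
    labelAt (x ++ y) ((x ++ y).findIdx P) = labelAt x (x.findIdx P) := by
  have hlt : x.findIdx P < x.length := List.findIdx_lt_length_of_exists hx
  simp [List.findIdx_append, hlt, labelAt, List.take_append, Nat.sub_eq_zero_of_le hlt.le]

lemma labelAt_findIdx_append_of_forall (y : KCode) (hx : ∀ q ∈ x, P q = false) :
    labelAt (x ++ y) ((x ++ y).findIdx P) = totalInc x + labelAt y (y.findIdx P) := by
  have hlen : x.findIdx P = x.length := List.findIdx_eq_length.2 hx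
  rw [List.findIdx_append, hlen, if_neg (lt_irrefl _), Nat.add_comm, labelAt, List.take_append,
    List.take_of_length_le (by simp)]
  simp [labelAt, totalInc]

lemma labelAt_findIdx_append_cons (y : KCode) {p : Passage} (hx : ∀ q ∈ x, P q = false)
    (hp : P p) : labelAt (x ++ p :: y) ((x ++ p :: y).findIdx P) = totalInc x := by
  rw [labelAt_findIdx_append_of_forall _ hx]
  simp [List.findIdx_cons, hp, labelAt]

lemma labelAt_findIdx_insert (u y : KCode) (hu : ∀ q ∈ u, P q = false) (hu0 : totalInc u = 0) :
    labelAt (x ++ u ++ y) ((x ++ u ++ y).findIdx P) = labelAt (x ++ y) ((x ++ y).findIdx P) := by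
  rw [List.append_assoc]
  by_cases hx : ∃ q ∈ x, P q
  · rw [labelAt_findIdx_append_of_exists _ hx, labelAt_findIdx_append_of_exists _ hx]
  · have hx' : ∀ q ∈ x, P q = false := by simpa using hx
    rw [labelAt_findIdx_append_of_forall _ hx', labelAt_findIdx_append_of_forall _ hx',
      labelAt_findIdx_append_of_forall _ hu, hu0, zero_add]

end FirstMatch

section Insertion

variable {i : ℕ} (x u y : KCode)

lemma sgn_insert (hu : ∀ q ∈ u, q.id ≠ i) : sgn (x ++ u ++ y) i = sgn (x ++ y) i := by
  have hu' : u.find? (fun p => p.id == i) = none := List.find?_eq_none.2 (by simpa using hu)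
  simp [sgn, List.find?_append, hu']

lemma wt_insert (hu : ∀ q ∈ u, q.id ≠ i) (hu0 : totalInc u = 0) :
    wt (x ++ u ++ y) i = wt (x ++ y) i := by
  have hP : ∀ b : Bool, ∀ q ∈ u, (q.id == i && q.isOver == b) = false := by
    intro b q hq; simp [hu q hq]
  unfold wt overPos underPos
  rw [labelAt_findIdx_insert u y (by simpa using hP true) hu0,
    labelAt_findIdx_insert u y (by simpa using hP false) hu0, sgn_insert x u y hu]

end Insertion

/-- The other passage of the same crossing. -/
def Passage.flip (p : Passage) : Passage := ⟨p.id, !p.isOver, p.sign⟩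

@[simp] lemma Passage.flip_id (p : Passage) : p.flip.id = p.id := rfl

@[simp] lemma Passage.flip_isOver (p : Passage) : p.flip.isOver = !p.isOver := rfl

@[simp] lemma Passage.flip_sign (p : Passage) : p.flip.sign = p.sign := rfl

@[simp] lemma Passage.flip_flip (p : Passage) : p.flip.flip = p := by simp [Passage.flip]

@[simp] lemma Passage.inc_flip (p : Passage) : p.flip.inc = -p.inc := by
  cases h : p.isOver <;> simp [Passage.inc, Passage.flip, h]

lemma Passage.flip_injective : Function.Injective Passage.flip :=
  Function.LeftInverse.injective Passage.flip_flip

lemma totalInc_map_flip (a : KCode) : totalInc (a.map Passage.flip) = -totalInc a := by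
  induction a with
  | nil => rfl
  | cons p a ih => simp [ih]; ring

lemma mem_crossIds {a : KCode} {i : ℕ} : i ∈ crossIds a ↔ ∃ q ∈ a, q.id = i := by
  simp [crossIds]

namespace ValidK

variable {a b : KCode} (ha : ValidK a)
include ha

lemma perm (h : a.Perm b) : ValidK b := by
  intro p hp
  obtain ⟨h1, h2, h3, h4⟩ := ha p (h.mem_iff.2 hp)
  exact ⟨h1, (h.filter _).length_eq ▸ h2, (h.filter _).length_eq ▸ h3,
    fun q hq => h4 q (h.mem_iff.2 hq)⟩

lemma filter_length_eq_one {p : Passage} (hp : p ∈ a) :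
    (a.filter fun q => q.id == p.id && q.isOver == p.isOver).length = 1 := by
  obtain ⟨-, h2, h3, -⟩ := ha p hp
  cases h : p.isOver
  · simpa [h] using h3
  · simpa [h] using h2

lemma sgn_eq {p : Passage} (hp : p ∈ a) : sgn a p.id = p.sign := by
  obtain ⟨r, hr⟩ : ∃ r, a.find? (fun q => q.id == p.id) = some r :=
    Option.isSome_iff_exists.1 (List.find?_isSome.2 ⟨p, hp, by simp⟩)
  have hr_id : r.id = p.id := by simpa using List.find?_some hr
  simp [sgn, hr, (ha p hp).2.2.2 r (List.mem_of_find?_eq_some hr) hr_id]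

lemma eq_of_mem {p q : Passage} (hp : p ∈ a) (hq : q ∈ a) (hid : q.id = p.id)
    (hover : q.isOver = p.isOver) : q = p := by
  obtain ⟨r, hr⟩ := List.length_eq_one_iff.1 (ha.filter_length_eq_one hp)
  have mem_r : ∀ s ∈ a, s.id = p.id → s.isOver = p.isOver → s = r := fun s hs h1 h2 => by
    have : s ∈ a.filter fun q => q.id == p.id && q.isOver == p.isOver :=
      List.mem_filter.2 ⟨hs, by simp [h1, h2]⟩
    simpa [hr] using this
  rw [mem_r q hq hid hover, mem_r p hp rfl rfl]

lemma nodup : a.Nodup := by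
  refine List.nodup_iff_count_le_one.2 fun p => ?_
  by_cases hp : p ∈ a
  · rw [List.count_eq_length_filter, ← ha.filter_length_eq_one hp]
    exact (List.monotone_filter_right a fun q hq => by simp_all).length_le
  · simp [List.count_eq_zero_of_not_mem hp]

lemma flip_mem {p : Passage} (hp : p ∈ a) : p.flip ∈ a := by
  obtain ⟨-, h2, h3, h4⟩ := ha p hp
  obtain ⟨q, hq, hqid, hqover⟩ : ∃ q ∈ a, q.id = p.id ∧ q.isOver = !p.isOver := by
    cases h : p.isOver
    · obtain ⟨q, hq⟩ := List.length_eq_one_iff.1 h2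
      have := List.mem_filter.1 (hq ▸ List.mem_singleton_self q)
      exact ⟨q, this.1, by simpa using this.2⟩
    · obtain ⟨q, hq⟩ := List.length_eq_one_iff.1 h3
      have := List.mem_filter.1 (hq ▸ List.mem_singleton_self q)
      exact ⟨q, this.1, by simpa using this.2⟩
  have hqsign := h4 q hq hqid
  have : q = p.flip := by
    cases q; simp_all [Passage.flip]
  exact this ▸ hq

lemma map_flip_perm : (a.map Passage.flip).Perm a :=
  (List.perm_ext_iff_of_nodup ((List.nodup_map_iff Passage.flip_injective).2 ha.nodup)
    ha.nodup).2 fun p => ⟨fun hp => by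
      obtain ⟨q, hq, rfl⟩ := List.mem_map.1 hp
      exact ha.flip_mem hq, fun hp => List.mem_map.2 ⟨p.flip, ha.flip_mem hp, by simp⟩⟩

lemma totalInc_eq_zero : totalInc a = 0 := by
  have h : totalInc (a.map Passage.flip) = totalInc a := ha.map_flip_perm.map Passage.inc |>.sum_eq
  have h' := totalInc_map_flip a
  omega

lemma labelAt_findIdx_eq {x y : KCode} {p : Passage} (h : a = x ++ p :: y) :
    labelAt a (a.findIdx fun q => q.id == p.id && q.isOver == p.isOver) = totalInc x := by
  have hpx : p ∉ x := fun hpx =>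
    (List.nodup_cons.1 (List.nodup_middle.1 (h ▸ ha.nodup))).1 (List.mem_append_left y hpx)
  subst h
  refine labelAt_findIdx_append_cons y (fun q hq => ?_) (by simp)
  by_contra hne
  simp only [Bool.not_eq_false, Bool.and_eq_true, beq_iff_eq] at hne
  exact hpx (ha.eq_of_mem (by simp) (List.mem_append_left _ hq) hne.1 hne.2 ▸ hq)

lemma wt_eq {x y x' y' : KCode} {p : Passage} (hp : a = x ++ p :: y)
    (hq : a = x' ++ p.flip :: y') :
    wt a p.id =
      (if p.isOver then totalInc x - totalInc x' else totalInc x' - totalInc x) - p.sign := by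
  have hl := ha.labelAt_findIdx_eq hp
  have hl' := ha.labelAt_findIdx_eq hq
  have hs := ha.sgn_eq (p := p) (by simp [hp])
  simp only [Passage.flip_id, Passage.flip_isOver] at hl'
  unfold wt overPos underPos
  cases h : p.isOver <;> simp_all

end ValidK

lemma wrn_eq_sum (a : KCode) (n : ℤ) :
    wrn a n = ((crossIds a).map fun i => if wt a i = n then sgn a i else 0).sum := by
  simp only [wrn, List.sum_map_ite, List.map_const', List.sum_replicate, smul_zero, add_zero]
  congr

lemma wrn_eq_add {a b : KCode} {l : List ℕ} (n : ℤ)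
    (hperm : (crossIds b).Perm (l ++ crossIds a))
    (h : ∀ i ∈ crossIds a, wt b i = wt a i ∧ sgn b i = sgn a i) :
    wrn b n = (l.map fun i => if wt b i = n then sgn b i else 0).sum + wrn a n := by
  rw [wrn_eq_sum, (hperm.map _).sum_eq, List.map_append, List.sum_append, wrn_eq_sum]
  congr 1
  exact congrArg List.sum (List.map_congr_left fun i hi => by rw [(h i hi).1, (h i hi).2])

lemma crossIds_perm {a b : KCode} (h : a.Perm b) : (crossIds a).Perm (crossIds b) :=
  (h.map Passage.id).dedup

lemma ValidK.sgn_perm {a b : KCode} (ha : ValidK a) (h : a.Perm b) {p : Passage} (hp : p ∈ a) :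
    sgn b p.id = sgn a p.id := by
  rw [(ha.perm h).sgn_eq (h.mem_iff.1 hp), ha.sgn_eq hp]

lemma exists_decomp_append_comm {x y : KCode} (hxy : totalInc (x ++ y) = 0) {p : Passage}
    (hp : p ∈ x ++ y) : ∃ u v u' v', x ++ y = u ++ p :: v ∧ y ++ x = u' ++ p :: v' ∧
      totalInc u' = totalInc u + totalInc y := by
  rcases List.mem_append.1 hp with hp | hp
  · obtain ⟨s, t, rfl⟩ := List.append_of_mem hp
    exact ⟨s, t ++ y, y ++ s, t, by simp, by simp, by simp; ring⟩
  · obtain ⟨s, t, rfl⟩ := List.append_of_mem hp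
    exact ⟨x ++ s, t, s, t ++ x, by simp, by simp, by simp at hxy ⊢; linarith⟩

lemma ValidK.wt_append_comm {x y : KCode} (h : ValidK (x ++ y)) {p : Passage} (hp : p ∈ x ++ y) :
    wt (y ++ x) p.id = wt (x ++ y) p.id := by
  obtain ⟨u, v, u', v', h1, h1', e1⟩ := exists_decomp_append_comm h.totalInc_eq_zero hp
  obtain ⟨w, z, w', z', h2, h2', e2⟩ :=
    exists_decomp_append_comm h.totalInc_eq_zero (h.flip_mem hp)
  rw [(h.perm List.perm_append_comm).wt_eq h1' h2', h.wt_eq h1 h2, e1, e2]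
  split_ifs <;> ring

lemma ValidK.wrn_append_comm {x y : KCode} (h : ValidK (x ++ y)) (n : ℤ) :
    wrn (y ++ x) n = wrn (x ++ y) n := by
  rw [wrn_eq_add (l := []) n (crossIds_perm List.perm_append_comm), List.map_nil, List.sum_nil,
    zero_add]
  intro i hi
  obtain ⟨p, hp, rfl⟩ := mem_crossIds.1 hi
  exact ⟨h.wt_append_comm hp, h.sgn_perm List.perm_append_comm hp⟩

section Relabel

lemma labelAt_relabel (f : ℕ → ℕ) (a : KCode) (k : ℕ) :
    labelAt (relabel f a) k = labelAt a k := by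
  simp only [labelAt, relabel, ← List.map_take, List.map_map]
  rfl

variable {f : ℕ → ℕ} (hf : Function.Injective f) (a : KCode)
include hf

lemma overPos_relabel (i : ℕ) : overPos (relabel f a) (f i) = overPos a i := by
  simp [overPos, relabel, List.findIdx_map, Function.comp_def, hf.beq_eq]

lemma underPos_relabel (i : ℕ) : underPos (relabel f a) (f i) = underPos a i := by
  simp [underPos, relabel, List.findIdx_map, Function.comp_def, hf.beq_eq]

lemma sgn_relabel (i : ℕ) : sgn (relabel f a) (f i) = sgn a i := by
  simp [sgn, relabel, List.find?_map, Function.comp_def, hf.beq_eq, Option.map_map]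

lemma wt_relabel (i : ℕ) : wt (relabel f a) (f i) = wt a i := by
  simp only [wt, overPos_relabel hf, underPos_relabel hf, sgn_relabel hf, labelAt_relabel]

lemma crossIds_relabel : crossIds (relabel f a) = (crossIds a).map f := by
  simp [crossIds, relabel, Function.comp_def, ← List.dedup_map_of_injective hf]

lemma wrn_relabel (n : ℤ) : wrn (relabel f a) n = wrn a n := by
  simp [wrn_eq_sum, crossIds_relabel hf, Function.comp_def, wt_relabel hf, sgn_relabel hf]

lemma validK_relabel_iff : ValidK (relabel f a) ↔ ValidK a := by
  simp [ValidK, relabel, List.filter_map, Function.comp_def, hf.beq_eq, hf.eq_iff]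

end Relabel

lemma validK_append_iff_of_disjoint {u w : KCode} (hu : ValidK u)
    (hdis : ∀ p ∈ u, ∀ q ∈ w, p.id ≠ q.id) : ValidK (u ++ w) ↔ ValidK w := by
  have hw : ∀ q ∈ w, ∀ c : Passage → Bool, u.filter (fun r => r.id == q.id && c r) = [] :=
    fun q hq c => List.filter_eq_nil_iff.2 fun r hr => by simp [hdis r hr q hq]
  have hu' : ∀ p ∈ u, ∀ c : Passage → Bool, w.filter (fun r => r.id == p.id && c r) = [] :=
    fun p hp c => List.filter_eq_nil_iff.2 fun r hr => by simp [(hdis p hp r hr).symm]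
  constructor
  · intro h q hq
    obtain ⟨h1, h2, h3, h4⟩ := h q (List.mem_append_right u hq)
    rw [List.filter_append, hw q hq] at h2 h3
    exact ⟨h1, h2, h3, fun r hr => h4 r (List.mem_append_right u hr)⟩
  · intro h p hp
    rcases List.mem_append.1 hp with hp | hp
    · obtain ⟨h1, h2, h3, h4⟩ := hu p hp
      refine ⟨h1, ?_, ?_, fun r hr hrp => ?_⟩
      · rwa [List.filter_append, hu' p hp, List.append_nil]
      · rwa [List.filter_append, hu' p hp, List.append_nil]
      · rcases List.mem_append.1 hr with hr | hr
        · exact h4 r hr hrp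
        · exact absurd hrp.symm (hdis p hp r hr)
    · obtain ⟨h1, h2, h3, h4⟩ := h p hp
      refine ⟨h1, ?_, ?_, fun r hr hrp => ?_⟩
      · rwa [List.filter_append, hw p hp, List.nil_append]
      · rwa [List.filter_append, hw p hp, List.nil_append]
      · rcases List.mem_append.1 hr with hr | hr
        · exact absurd hrp (hdis r hr p hp)
        · exact h4 r hr hrp

lemma validK_kink {p : Passage} (hs : p.sign = 1 ∨ p.sign = -1) : ValidK [p, p.flip] := by
  cases h : p.isOver <;> simp [ValidK, List.filter_cons, Passage.flip, h, hs]

lemma validK_iff_of_perm_append {a b u : KCode} (h : b.Perm (u ++ a)) (hu : ValidK u)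
    (hdis : ∀ p ∈ u, ∀ q ∈ a, p.id ≠ q.id) : ValidK b ↔ ValidK a := by
  rw [← validK_append_iff_of_disjoint hu hdis]
  exact ⟨fun hb => hb.perm h, fun hb => hb.perm h.symm⟩

lemma crossIds_perm_of_perm_append {a b u : KCode} {l : List ℕ} (h : b.Perm (u ++ a))
    (hl : l.Nodup) (hu : ∀ i, i ∈ l ↔ ∃ r ∈ u, r.id = i)
    (hdis : ∀ i ∈ l, i ∉ crossIds a) :
    (crossIds b).Perm (l ++ crossIds a) :=
  (List.perm_ext_iff_of_nodup (List.nodup_dedup _)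
    (List.nodup_append.2
      ⟨hl, List.nodup_dedup _, fun i hi _ hj hij => hdis i hi (hij ▸ hj)⟩)).2
    fun i => by
      simp only [List.mem_append, hu, List.mem_dedup, List.mem_map, h.mem_iff, or_and_right,
        exists_or]

section Kink

variable {x y : KCode} {p : Passage}

lemma ValidK.wt_kink (h : ValidK (x ++ [p, p.flip] ++ y)) :
    wt (x ++ [p, p.flip] ++ y) p.id = 0 := by
  rw [h.wt_eq (p := p) (x := x) (y := p.flip :: y) (x' := x ++ [p]) (y' := y) (by simp) (by simp)]
  cases hp : p.isOver <;> simp [Passage.inc, hp]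

lemma perm_kink : (x ++ [p, p.flip] ++ y).Perm ([p, p.flip] ++ (x ++ y)) := by
  simpa only [List.append_assoc] using List.perm_append_comm_assoc x [p, p.flip] y

lemma ValidK.wrn_kink (h : ValidK (x ++ [p, p.flip] ++ y)) (hfresh : p.id ∉ crossIds (x ++ y))
    {n : ℤ} (hn : n ≠ 0) : wrn (x ++ [p, p.flip] ++ y) n = wrn (x ++ y) n := by
  have hperm : (crossIds (x ++ [p, p.flip] ++ y)).Perm ([p.id] ++ crossIds (x ++ y)) :=
    crossIds_perm_of_perm_append perm_kink (List.nodup_singleton _) (fun i => by simp [eq_comm])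
      (by simpa using hfresh)
  rw [wrn_eq_add n hperm]
  · rw [List.map_singleton, List.sum_singleton, h.wt_kink, if_neg (Ne.symm hn), zero_add]
  · intro i hi
    have hu : ∀ q ∈ [p, p.flip], q.id ≠ i := by
      rintro q hq rfl
      rcases List.mem_pair.1 hq with rfl | rfl <;> simp_all
    exact ⟨wt_insert x _ y hu (by simp), sgn_insert x _ y hu⟩

lemma validK_kink_iff (hs : p.sign = 1 ∨ p.sign = -1) (hfresh : p.id ∉ crossIds (x ++ y)) :
    ValidK (x ++ [p, p.flip] ++ y) ↔ ValidK (x ++ y) :=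
  validK_iff_of_perm_append perm_kink (validK_kink hs) fun q hq r hr hqr => hfresh <|
    mem_crossIds.2 ⟨r, hr, by rcases List.mem_pair.1 hq with rfl | rfl <;> simp [← hqr]⟩

end Kink

section SecondMove

/-- The second strand of a second Reidemeister move, passing the crossings of the first strand
`[p, q]` in the same (`ord = false`) or the opposite (`ord = true`) order. -/
def r2Block (ord : Bool) (p q : Passage) : KCode :=
  if ord then [q.flip, p.flip] else [p.flip, q.flip]

variable {x z w : KCode} {p q : Passage}

lemma totalInc_r2 (hover : q.isOver = p.isOver) (hsign : q.sign = -p.sign) :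
    totalInc [p, q] = 0 := by
  cases hp : p.isOver <;> simp [Passage.inc, hp, hover, hsign]

lemma totalInc_r2Block (ord : Bool) (hover : q.isOver = p.isOver) (hsign : q.sign = -p.sign) :
    totalInc (r2Block ord p q) = 0 := by
  have := totalInc_r2 hover hsign
  cases ord <;> simp [r2Block] at this ⊢ <;> linarith

lemma id_of_mem_r2Block {ord : Bool} {r : Passage} (hr : r ∈ r2Block ord p q) :
    r.id = p.id ∨ r.id = q.id := by
  cases ord <;> simp [r2Block] at hr <;> rcases hr with rfl | rfl <;> simp

lemma validK_r2 (ord : Bool) (hs : p.sign = 1 ∨ p.sign = -1) (hsign : q.sign = -p.sign)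
    (hpq : p.id ≠ q.id) : ValidK ([p, q] ++ r2Block ord p q) := by
  have hkinks : ValidK ([p, p.flip] ++ [q, q.flip]) :=
    (validK_append_iff_of_disjoint (validK_kink hs) (by simp [hpq])).2
      (validK_kink (by rw [hsign]; omega))
  cases ord
  · exact hkinks.perm ((List.Perm.swap p.flip q [q.flip]).cons p).symm
  · exact hkinks.perm ((List.perm_middle (l₁ := [q, q.flip]) (l₂ := [])).cons p).symm

lemma perm_r2 (v : KCode) :
    (x ++ [p, q] ++ (z ++ v ++ w)).Perm (([p, q] ++ v) ++ (x ++ (z ++ w))) :=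
  List.perm_iff_count.2 fun r => by simp only [List.count_append]; omega

lemma mem_ids_r2 (ord : Bool) (i : ℕ) :
    i ∈ [p.id, q.id] ↔ ∃ r ∈ [p, q] ++ r2Block ord p q, r.id = i := by
  refine ⟨fun hi => ?_, fun ⟨r, hr, hri⟩ => ?_⟩
  · rcases List.mem_pair.1 hi with rfl | rfl <;> exact ⟨_, by simp, rfl⟩
  · rcases List.mem_append.1 hr with hr | hr
    · rcases List.mem_pair.1 hr with rfl | rfl <;> simp [← hri]
    · rcases id_of_mem_r2Block hr with h' | h' <;> simp [← hri, h']

lemma disjoint_r2 {ord : Bool} (hp : p.id ∉ crossIds (x ++ (z ++ w)))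
    (hq : q.id ∉ crossIds (x ++ (z ++ w))) :
    ∀ r ∈ [p, q] ++ r2Block ord p q, ∀ t ∈ x ++ (z ++ w), r.id ≠ t.id := by
  intro r hr t ht hrt
  rcases List.mem_pair.1 ((mem_ids_r2 ord r.id).2 ⟨r, hr, rfl⟩) with h' | h'
  · exact hp (mem_crossIds.2 ⟨t, ht, by rw [← hrt, h']⟩)
  · exact hq (mem_crossIds.2 ⟨t, ht, by rw [← hrt, h']⟩)

lemma validK_r2_iff (ord : Bool) (hs : p.sign = 1 ∨ p.sign = -1) (hsign : q.sign = -p.sign)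
    (hpq : p.id ≠ q.id) (hp : p.id ∉ crossIds (x ++ (z ++ w)))
    (hq : q.id ∉ crossIds (x ++ (z ++ w))) :
    ValidK (x ++ [p, q] ++ (z ++ r2Block ord p q ++ w)) ↔ ValidK (x ++ (z ++ w)) :=
  validK_iff_of_perm_append (perm_r2 _) (validK_r2 ord hs hsign hpq) (disjoint_r2 hp hq)

lemma ValidK.wt_r2 (ord : Bool) (hover : q.isOver = p.isOver) (hsign : q.sign = -p.sign)
    (h : ValidK (x ++ [p, q] ++ (z ++ r2Block ord p q ++ w))) :
    wt (x ++ [p, q] ++ (z ++ r2Block ord p q ++ w)) q.id =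
      wt (x ++ [p, q] ++ (z ++ r2Block ord p q ++ w)) p.id := by
  cases ord
  · rw [h.wt_eq (p := p) (x := x) (y := q :: z ++ p.flip :: q.flip :: w) (x' := x ++ [p, q] ++ z)
        (y' := q.flip :: w) (by simp [r2Block]) (by simp [r2Block]),
      h.wt_eq (p := q) (x := x ++ [p]) (y := z ++ p.flip :: q.flip :: w)
        (x' := x ++ [p, q] ++ z ++ [p.flip]) (y' := w) (by simp [r2Block]) (by simp [r2Block])]
    cases hp : p.isOver <;> simp [Passage.inc, hp, hover, hsign] <;> ring
  · rw [h.wt_eq (p := p) (x := x) (y := q :: z ++ q.flip :: p.flip :: w)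
        (x' := x ++ [p, q] ++ z ++ [q.flip]) (y' := w) (by simp [r2Block]) (by simp [r2Block]),
      h.wt_eq (p := q) (x := x ++ [p]) (y := z ++ q.flip :: p.flip :: w)
        (x' := x ++ [p, q] ++ z) (y' := p.flip :: w) (by simp [r2Block]) (by simp [r2Block])]
    cases hp : p.isOver <;> simp [Passage.inc, hp, hover, hsign]; ring

lemma ValidK.wrn_r2 (ord : Bool) (hover : q.isOver = p.isOver) (hsign : q.sign = -p.sign)
    (h : ValidK (x ++ [p, q] ++ (z ++ r2Block ord p q ++ w))) (hpq : p.id ≠ q.id)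
    (hp : p.id ∉ crossIds (x ++ (z ++ w))) (hq : q.id ∉ crossIds (x ++ (z ++ w))) (n : ℤ) :
    wrn (x ++ [p, q] ++ (z ++ r2Block ord p q ++ w)) n = wrn (x ++ (z ++ w)) n := by
  have hperm : (crossIds (x ++ [p, q] ++ (z ++ r2Block ord p q ++ w))).Perm
      ([p.id, q.id] ++ crossIds (x ++ (z ++ w))) :=
    crossIds_perm_of_perm_append (perm_r2 _) (by simpa using hpq) (mem_ids_r2 ord)
      (by simp [hp, hq])
  rw [wrn_eq_add n hperm]
  · simp only [List.map_cons, List.map_nil, List.sum_cons, List.sum_nil, h.wt_r2 ord hover hsign,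
      h.sgn_eq (p := p) (by simp), h.sgn_eq (p := q) (by simp), hsign]
    split_ifs <;> ring
  · intro i hi
    have hu : ∀ r ∈ [p, q], r.id ≠ i := by
      rintro r hr rfl
      rcases List.mem_pair.1 hr with rfl | rfl <;> contradiction
    have hv : ∀ r ∈ r2Block ord p q, r.id ≠ i := by
      rintro r hr rfl
      rcases id_of_mem_r2Block hr with h' | h' <;> rw [h'] at hi <;> contradiction
    have hsplit : x ++ (z ++ r2Block ord p q ++ w) = x ++ z ++ r2Block ord p q ++ w := by simp
    constructor
    · rw [wt_insert x _ _ hu (totalInc_r2 hover hsign), hsplit,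
        wt_insert _ _ _ hv (totalInc_r2Block ord hover hsign), List.append_assoc]
    · rw [sgn_insert x _ _ hu, hsplit, sgn_insert _ _ _ hv, List.append_assoc]

end SecondMove

section Swap

/-- The change of the weight of crossing `i` when the adjacent passages `[A, B]` are transposed. -/
def swapShift : KCode → ℕ → ℤ
  | [A, B], i =>
    (if i = A.id then (if A.isOver then B.inc else -B.inc) else 0) +
      (if i = B.id then (if B.isOver then -A.inc else A.inc) else 0)
  | _, _ => 0

variable {x y : KCode} {A B : Passage}

lemma exists_decomp_swap (hnd : (x ++ A :: B :: y).Nodup) {p : Passage}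
    (hp : p ∈ x ++ A :: B :: y) :
    ∃ u v u' v', x ++ A :: B :: y = u ++ p :: v ∧ x ++ B :: A :: y = u' ++ p :: v' ∧
      totalInc u' = totalInc u + (if p = A then B.inc else if p = B then -A.inc else 0) := by
  have hnd' := List.nodup_append.1 hnd
  simp only [List.nodup_cons, List.mem_cons, not_or] at hnd'
  obtain ⟨-, ⟨⟨hAB, hAy⟩, hBy, -⟩, hdis⟩ := hnd'
  rcases List.mem_append.1 hp with hp | hp
  · obtain ⟨s, t, rfl⟩ := List.append_of_mem hp
    have hpA : p ≠ A := fun h => hdis p hp A (by simp) (by simp [h])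
    have hpB : p ≠ B := fun h => hdis p hp B (by simp) (by simp [h])
    exact ⟨s, t ++ A :: B :: y, s, t ++ B :: A :: y, by simp, by simp, by simp [hpA, hpB]⟩
  rcases List.mem_cons.1 hp with rfl | hp
  · exact ⟨x, B :: y, x ++ [B], y, rfl, by simp, by simp⟩
  rcases List.mem_cons.1 hp with rfl | hp
  · exact ⟨x ++ [A], y, x, A :: y, by simp, rfl, by simp [Ne.symm hAB]⟩
  · obtain ⟨s, t, rfl⟩ := List.append_of_mem hp
    have hpA : p ≠ A := by rintro rfl; simp at hAy
    have hpB : p ≠ B := by rintro rfl; simp at hBy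
    exact ⟨x ++ A :: B :: s, t, x ++ B :: A :: s, t, by simp, by simp,
      by simp [hpA, hpB]; ring⟩

lemma ValidK.wt_swap (h : ValidK (x ++ A :: B :: y)) (hAB : A.id ≠ B.id) {p : Passage}
    (hp : p ∈ x ++ A :: B :: y) :
    wt (x ++ B :: A :: y) p.id = wt (x ++ A :: B :: y) p.id + swapShift [A, B] p.id := by
  obtain ⟨u, v, u', v', h1, h1', e1⟩ := exists_decomp_swap h.nodup hp
  obtain ⟨w, z, w', z', h2, h2', e2⟩ := exists_decomp_swap h.nodup (h.flip_mem hp)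
  have hba : ValidK (x ++ B :: A :: y) :=
    h.perm (List.Perm.append_left x (List.Perm.swap B A y))
  rw [hba.wt_eq h1' h2', h.wt_eq h1 h2, e1, e2]
  have hA : A ∈ x ++ A :: B :: y := by simp
  have hB : B ∈ x ++ A :: B :: y := by simp
  have key : ∀ r ∈ x ++ A :: B :: y, ∀ C ∈ x ++ A :: B :: y,
      r = C ↔ r.id = C.id ∧ r.isOver = C.isOver := fun r hr C hC =>
    ⟨by rintro rfl; simp, fun hrC => (h.eq_of_mem hC hr hrC.1 hrC.2)⟩
  simp only [key p hp A hA, key p hp B hB, key _ (h.flip_mem hp) A hA, key _ (h.flip_mem hp) B hB,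
    swapShift, Passage.flip_id, Passage.flip_isOver]
  cases p.isOver <;> cases A.isOver <;> cases B.isOver <;>
    by_cases hpA : p.id = A.id <;> by_cases hpB : p.id = B.id <;> simp_all <;> ring

end Swap

def IsSwap (u v : KCode) : Prop := ∃ A B : Passage, A.id ≠ B.id ∧ u = [A, B] ∧ v = [B, A]

lemma ReplC.append_left {y y' : KCode} {segs segs' : List (KCode × KCode)}
    (h : ReplC y y' segs segs') (w : KCode) : ReplC (w ++ y) (w ++ y') segs segs' := by
  cases h with
  | nil => exact .nil _ _
  | cons x u v h' => simpa [List.append_assoc] using ReplC.cons (w ++ x) u v h'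

section Swaps

variable {ps : List (KCode × KCode)} {a b : KCode}

lemma ReplC.perm_of_isSwap (hps : ∀ q ∈ ps, IsSwap q.1 q.2) (h : ReplC a b ps []) :
    a.Perm b := by
  induction ps generalizing a b with
  | nil => cases h; rfl
  | cons q ps ih =>
    obtain _ | ⟨x, u, v, h'⟩ := h
    obtain ⟨A, B, -, rfl, rfl⟩ := hps _ List.mem_cons_self
    rename_i y _
    have hswap : (x ++ [A, B] ++ y).Perm (x ++ [B, A] ++ y) := by
      simpa using (List.Perm.swap B A y).append_left x
    exact hswap.trans (ih (fun q hq => hps q (List.mem_cons_of_mem _ hq))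
      (by simpa using h'.append_left (x ++ [B, A])))

lemma ValidK.wt_of_replC_isSwap (ha : ValidK a) (hps : ∀ q ∈ ps, IsSwap q.1 q.2)
    (h : ReplC a b ps []) {p : Passage} (hp : p ∈ a) :
    wt b p.id = wt a p.id + (ps.map fun q => swapShift q.1 p.id).sum := by
  induction ps generalizing a b with
  | nil => cases h; simp
  | cons q ps ih =>
    obtain _ | ⟨x, u, v, h'⟩ := h
    obtain ⟨A, B, hAB, rfl, rfl⟩ := hps _ List.mem_cons_self
    rename_i y _
    have hswap : (x ++ [A, B] ++ y).Perm (x ++ [B, A] ++ y) := by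
      simpa using (List.Perm.swap B A y).append_left x
    rw [ih (ha.perm hswap) (fun q hq => hps q (List.mem_cons_of_mem _ hq))
      (by simpa using h'.append_left (x ++ [B, A])) (hswap.mem_iff.1 hp)]
    simp only [List.append_assoc, List.cons_append, List.nil_append] at ha hp ⊢
    rw [ha.wt_swap hAB hp, List.map_cons, List.sum_cons]
    ring

lemma ValidK.wrn_of_replC_isSwap (ha : ValidK a) (hps : ∀ q ∈ ps, IsSwap q.1 q.2)
    (h : ReplC a b ps []) (hshift : ∀ i, (ps.map fun q => swapShift q.1 i).sum = 0) (n : ℤ) :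
    wrn b n = wrn a n := by
  have hperm := h.perm_of_isSwap hps
  rw [wrn_eq_add (l := []) n (crossIds_perm hperm.symm), List.map_nil, List.sum_nil, zero_add]
  intro i hi
  obtain ⟨p, hp, rfl⟩ := mem_crossIds.1 hi
  exact ⟨by rw [ha.wt_of_replC_isSwap hps h hp, hshift, add_zero], ha.sgn_perm hperm hp⟩

end Swaps

lemma isSwap_pairOf {A B : Passage} (hAB : A.id ≠ B.id) (t : Bool) :
    IsSwap (pairOf t A B) (pairOf (!t) A B) := by
  cases t
  · exact ⟨B, A, Ne.symm hAB, rfl, rfl⟩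
  · exact ⟨A, B, hAB, rfl, rfl⟩

section ThirdMove

variable {i j k : ℕ} {si sj sk : ℤ} {t : Bool} {segs : List (KCode × KCode)}

lemma isSwap_of_mem_r3 (hij : i ≠ j) (hik : i ≠ k) (hjk : j ≠ k)
    (hsegs : segs.Perm
      [(pairOf t ⟨i, true, si⟩ ⟨j, true, sj⟩,
        pairOf (!t) ⟨i, true, si⟩ ⟨j, true, sj⟩),
       (pairOf (t == (sj * sk == 1)) ⟨i, false, si⟩ ⟨k, true, sk⟩,
        pairOf (!(t == (sj * sk == 1))) ⟨i, false, si⟩ ⟨k, true, sk⟩),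
       (pairOf (t == (si * sk == 1)) ⟨j, false, sj⟩ ⟨k, false, sk⟩,
        pairOf (!(t == (si * sk == 1))) ⟨j, false, sj⟩ ⟨k, false, sk⟩)]) :
    ∀ q ∈ segs, IsSwap q.1 q.2 := by
  intro q hq
  simp only [hsegs.mem_iff, List.mem_cons, List.not_mem_nil, or_false] at hq
  rcases hq with rfl | rfl | rfl
  · exact isSwap_pairOf (by simpa using hij) t
  · exact isSwap_pairOf (by simpa using hik) _
  · exact isSwap_pairOf (by simpa using hjk) _

lemma swapShift_r3 (hsi : si = 1 ∨ si = -1) (hsj : sj = 1 ∨ sj = -1) (hsk : sk = 1 ∨ sk = -1)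
    (hij : i ≠ j) (hik : i ≠ k) (hjk : j ≠ k) (m : ℕ) :
    swapShift (pairOf t ⟨i, true, si⟩ ⟨j, true, sj⟩) m +
      swapShift (pairOf (t == (sj * sk == 1)) ⟨i, false, si⟩ ⟨k, true, sk⟩) m +
      swapShift (pairOf (t == (si * sk == 1)) ⟨j, false, sj⟩ ⟨k, false, sk⟩) m = 0 := by
  rcases hsi with rfl | rfl <;> rcases hsj with rfl | rfl <;> rcases hsk with rfl | rfl <;>
    cases t <;> by_cases hmi : m = i <;> by_cases hmj : m = j <;> by_cases hmk : m = k <;>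
    simp_all [pairOf, swapShift, Passage.inc]

end ThirdMove

lemma ReplL.single_left {k : ℕ} {a : KCode} {L' : LLC} {segs : List (KCode × KCode)}
    (h : ReplL [(k, a)] L' segs) : ∃ b, L' = [(k, b)] ∧ ReplC a b segs [] := by
  obtain _ | ⟨_, hc, hl⟩ := h
  cases hl
  exact ⟨_, rfl, hc⟩

lemma ReplL.single_right {k : ℕ} {b : KCode} {L : LLC} {segs : List (KCode × KCode)}
    (h : ReplL L [(k, b)] segs) : ∃ a, L = [(k, a)] ∧ ReplC a b segs [] := by
  obtain _ | ⟨_, hc, hl⟩ := h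
  cases hl
  exact ⟨_, rfl, hc⟩

lemma ReplC.exists_of_one {c c' u v : KCode} (h : ReplC c c' [(u, v)] []) :
    ∃ x y, c = x ++ u ++ y ∧ c' = x ++ v ++ y := by
  obtain _ | ⟨x, u, v, h'⟩ := h
  cases h'
  exact ⟨x, _, rfl, rfl⟩

lemma ReplC.exists_of_two {c c' u₁ v₁ u₂ v₂ : KCode}
    (h : ReplC c c' [(u₁, v₁), (u₂, v₂)] []) :
    ∃ x z w, c = x ++ u₁ ++ (z ++ u₂ ++ w) ∧ c' = x ++ v₁ ++ (z ++ v₂ ++ w) := by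
  obtain _ | ⟨x, u, v, h'⟩ := h
  obtain _ | ⟨z, u, v, h''⟩ := h'
  cases h''
  exact ⟨x, z, _, rfl, rfl⟩

lemma idsOf_single (k : ℕ) (a : KCode) : idsOf [(k, a)] = crossIds a := by
  simp [idsOf, plainL, crossIdsL]

lemma MoveStep.single_left {a : KCode} {L' : LLC} {n : ℤ} (hn : n ≠ 0)
    (h : MoveStep [(0, a)] L') :
    ∃ b, L' = [(0, b)] ∧ (ValidK a ↔ ValidK b) ∧ (ValidK a → wrn b n = wrn a n) := by
  cases h with
  | perm h =>
    obtain rfl := List.perm_singleton.1 h.symm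
    exact ⟨a, rfl, Iff.rfl, fun _ => rfl⟩
  | rotate _ x y _ =>
    exact ⟨y ++ x, rfl, ⟨(·.perm List.perm_append_comm), (·.perm List.perm_append_comm)⟩,
      fun ha => ha.wrn_append_comm n⟩
  | rename f hf =>
    exact ⟨relabel f a, rfl, (validK_relabel_iff hf a).symm, fun _ => wrn_relabel hf a n⟩
  | r1 i o s hs hi hrepl =>
    obtain ⟨b, rfl, hC⟩ := hrepl.single_left
    obtain ⟨x, y, rfl, rfl⟩ := hC.exists_of_one
    rw [idsOf_single, List.append_nil] at hi
    rw [List.append_nil]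
    exact ⟨_, rfl, (validK_kink_iff (p := ⟨i, o, s⟩) hs hi).symm,
      fun ha => ((validK_kink_iff (p := ⟨i, o, s⟩) hs hi).2 ha).wrn_kink hi hn⟩
  | r2 i j o ord s hs hij hi hj hrepl =>
    obtain ⟨b, rfl, hC⟩ := hrepl.single_left
    obtain ⟨x, z, w, rfl, rfl⟩ := hC.exists_of_two
    simp only [idsOf_single, List.append_nil] at hi hj ⊢
    have hv := validK_r2_iff (p := ⟨i, o, s⟩) (q := ⟨j, o, -s⟩) ord hs rfl hij hi hj
    refine ⟨_, rfl, hv.symm, fun ha => ?_⟩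
    exact (hv.2 ha).wrn_r2 (p := ⟨i, o, s⟩) (q := ⟨j, o, -s⟩) ord rfl rfl hij hi hj n
  | r3 i j k si sj sk hsi hsj hsk _ hij hik hjk t segs hsegs hrepl =>
    obtain ⟨b, rfl, hC⟩ := hrepl.single_left
    have hps := isSwap_of_mem_r3 hij hik hjk hsegs
    have hperm := hC.perm_of_isSwap hps
    refine ⟨b, rfl, ⟨(·.perm hperm), (·.perm hperm.symm)⟩,
      fun ha => ha.wrn_of_replC_isSwap hps hC (fun m => ?_) n⟩
    have := swapShift_r3 (t := t) hsi hsj hsk hij hik hjk m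
    rw [(hsegs.map _).sum_eq]
    simp only [List.map_cons, List.map_nil, List.sum_cons, List.sum_nil]
    linarith

lemma MoveStep.single_right {L L' : LLC} (h : MoveStep L L') {b : KCode} (hb : L' = [(0, b)]) :
    ∃ a, L = [(0, a)] := by
  cases h with
  | perm h => subst hb; exact ⟨b, List.perm_singleton.1 h⟩
  | rotate =>
    simp only [List.cons.injEq, Prod.mk.injEq] at hb
    obtain ⟨⟨rfl, -⟩, rfl⟩ := hb
    exact ⟨_, rfl⟩
  | rename =>
    obtain ⟨⟨k, c⟩, rfl, hk⟩ := List.map_eq_singleton_iff.1 hb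
    simp only [Prod.mk.injEq] at hk
    exact ⟨c, by rw [hk.1]⟩
  | r1 _ _ _ _ _ hrepl | r2 _ _ _ _ _ _ _ _ _ hrepl | r3 _ _ _ _ _ _ _ _ _ _ _ _ _ _ _ _ hrepl =>
    subst hb
    obtain ⟨a, rfl, -⟩ := hrepl.single_right
    exact ⟨a, rfl⟩

lemma ValidK.wrn_of_reflTransGen {a : KCode} {L : LLC} {n : ℤ} (hn : n ≠ 0) (ha : ValidK a)
    (h : Relation.ReflTransGen (Relation.SymmGen MoveStep) [(0, a)] L) :
    ∃ b, L = [(0, b)] ∧ ValidK b ∧ wrn b n = wrn a n := by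
  induction h with
  | refl => exact ⟨a, rfl, ha, rfl⟩
  | tail _ hstep ih =>
    obtain ⟨b, rfl, hb, hwb⟩ := ih
    rcases hstep with hstep | hstep
    · obtain ⟨c, rfl, hbc, hw⟩ := hstep.single_left hn
      exact ⟨c, rfl, hbc.1 hb, (hw hb).trans hwb⟩
    · obtain ⟨c, rfl⟩ := hstep.single_right rfl
      obtain ⟨b', hb', hcb, hw⟩ := hstep.single_left hn
      obtain rfl : b' = b := by simpa using hb'.symm
      exact ⟨c, rfl, hcb.2 hb, (hw (hcb.2 hb)).symm.trans hwb⟩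

theorem wrn_isotopy_invariant_general (a b : KCode) (ha : ValidK a)
    (n : ℤ) (hn : n ≠ 0) (h : Isotopic [(0, a)] [(0, b)]) :
    wrn a n = wrn b n := by
  rw [Isotopic, ← Relation.EqvGen.reflTransGen_symmGen] at h
  obtain ⟨b', hb', -, hw⟩ := ha.wrn_of_reflTransGen hn h
  obtain rfl : b = b' := by simpa using hb'
  exact hw.symm

/-- For each nonzero integer `n`, the signed crossing count
`wr_n(K) = ∑_{c : W_K(c) = n} sgn(c)` is an invariant of virtual knots, i.e.
it is unchanged under oriented virtual isotopy (oriented classical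
Reidemeister moves, virtual Reidemeister moves and the detour move, the latter
two leaving the Gauss code unchanged). -/
theorem wrn_isotopy_invariant (a b : KCode) (ha : ValidK a) (hb : ValidK b)
    (n : ℤ) (hn : n ≠ 0) (h : Isotopic [(0, a)] [(0, b)]) :
    wrn a n = wrn b n :=
  wrn_isotopy_invariant_general a b ha n hn h
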